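/- Suppose condition (I¹_ρ) holds for some ρ > 0: there exists a finite positive Borel measure dA^ρ on [0,1], with α^ρ[u] := ∫₀¹ u(t) dA^ρ(t) and 𝒦^ρ(s) := ∫₀¹ k(t,s) dA^ρ(t), such that α^ρ[γ] < 1, H[u] ≤ α^ρ[u] for every u ∈ K with ‖u‖ = ρ, and f^{0,ρ} · sup_{t∈[0,1]} { γ(t)/(1−α^ρ[γ]) · ∫₀¹ 𝒦^ρ(s) g(s) ds + ∫₀¹ k(t,s) g(s) ds } < 1, where f^{0,ρ} := ess sup { f(t,u)/ρ : t ∈ [0,1], 0 ≤ u ≤ ρ }. Then for every u ∈ K with ‖u‖ = ρ and every real μ ≥ 1 one has μ·u ≠ Tu. -/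

import Mathlib

open MeasureTheory Set

/-- Supremum norm of `u` on `[0,1]`. -/
noncomputable def nrm (u : ℝ → ℝ) : ℝ := sSup ((fun t => |u t|) '' Icc (0:ℝ) 1)

/-- Minimum (infimum) of `u` on `[a,b]`. -/
noncomputable def minOnAB (u : ℝ → ℝ) (a b : ℝ) : ℝ := sInf (u '' Icc a b)

/-- The perturbed Hammerstein operator `Tu(t) = γ(t)H[u] + ∫₀¹ k(t,s)g(s)f(s,u(s)) ds`. -/
noncomputable def Tham (k : ℝ → ℝ → ℝ) (g : ℝ → ℝ) (f : ℝ → ℝ → ℝ) (γ : ℝ → ℝ)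
    (H : (ℝ → ℝ) → ℝ) (u : ℝ → ℝ) (t : ℝ) : ℝ :=
  γ t * H u + ∫ s in (0:ℝ)..1, k t s * g s * f s (u s)

/-- Condition (I¹_ρ) for non-negative kernels (with `f^{0,ρ}`). -/
def CondI1B (k : ℝ → ℝ → ℝ) (g : ℝ → ℝ) (f : ℝ → ℝ → ℝ) (γ : ℝ → ℝ)
    (H : (ℝ → ℝ) → ℝ) (K : Set (ℝ → ℝ)) (ρ : ℝ) : Prop :=
  ∃ μA : Measure ℝ, IsFiniteMeasure μA ∧ μA ((Icc (0:ℝ) 1)ᶜ) = 0 ∧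
    (∫ t, γ t ∂μA) < 1 ∧
    (∀ u ∈ K, nrm u = ρ → H u ≤ ∫ t, u t ∂μA) ∧
    ∃ fb : ℝ,
      (∀ᵐ t ∂(volume.restrict (Icc (0:ℝ) 1)), ∀ u : ℝ, 0 ≤ u → u ≤ ρ → f t u ≤ fb * ρ) ∧
      fb * sSup ((fun t => γ t / (1 - ∫ t', γ t' ∂μA) *
          (∫ s in (0:ℝ)..1, (∫ t', k t' s ∂μA) * g s) +
          ∫ s in (0:ℝ)..1, k t s * g s) '' Icc (0:ℝ) 1) < 1

/-! Integrating `μ u = T u` against `dA^ρ` and using `H[u] ≤ α^ρ[u] ≤ μ α^ρ[u]` (with Fubini for the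
kernel term) gives `H[u] (1 - α^ρ[γ]) ≤ f^{0,ρ} ρ ∫ 𝒦^ρ g`. Substituting this back into the equation
pointwise yields `u ≤ f^{0,ρ} ρ · sup {…}`, so `ρ = ‖u‖ < ρ`. -/

open Filter

lemma abs_le_nrm {u : ℝ → ℝ} (hu : ContinuousOn u (Icc 0 1)) {t : ℝ} (ht : t ∈ Icc (0:ℝ) 1) :
    |u t| ≤ nrm u :=
  le_csSup (isCompact_Icc.bddAbove_image hu.abs) ⟨t, ht, rfl⟩

lemma nrm_le {u : ℝ → ℝ} {M : ℝ} (h : ∀ t ∈ Icc (0:ℝ) 1, |u t| ≤ M) : nrm u ≤ M :=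
  csSup_le ((nonempty_Icc.2 zero_le_one).image _) (forall_mem_image.2 h)

lemma intervalIntegral_zero_one_eq (F : ℝ → ℝ) :
    ∫ s in (0:ℝ)..1, F s = ∫ s in Icc (0:ℝ) 1, F s := by
  rw [intervalIntegral.integral_of_le zero_le_one, integral_Icc_eq_integral_Ioc]

lemma ContinuousOn.integrable_of_ae_mem {X E : Type*} [TopologicalSpace X] [T2Space X]
    [MeasurableSpace X] [OpensMeasurableSpace X] [NormedAddCommGroup E] {μ : Measure X}
    [IsFiniteMeasure μ] {s : Set X} {u : X → E} (hu : ContinuousOn u s) (hs : IsCompact s)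
    (hμ : ∀ᵐ x ∂μ, x ∈ s) : Integrable u μ := by
  simpa only [IntegrableOn, Measure.restrict_eq_self_of_ae_mem hμ] using
    hu.integrableOn_compact (μ := μ) hs

lemma integral_mul_le_of_ae_le {α : Type*} [MeasurableSpace α] {ν : Measure α} {w φ : α → ℝ}
    {M : ℝ} (hM : 0 ≤ M) (hw : Integrable w ν) (hw0 : 0 ≤ᵐ[ν] w) (hφ : ∀ᵐ x ∂ν, φ x ≤ M) :
    ∫ x, w x * φ x ∂ν ≤ M * ∫ x, w x ∂ν := by
  by_cases hint : Integrable (fun x => w x * φ x) ν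
  · rw [← integral_const_mul]
    refine integral_mono_ae hint (hw.const_mul M) ?_
    filter_upwards [hw0, hφ] with x hwx hφx
    simpa only [mul_comm M] using mul_le_mul_of_nonneg_left hφx hwx
  · rw [integral_undef hint]
    exact mul_nonneg hM (integral_nonneg_of_ae hw0)

lemma integrable_uncurry_of_ae_norm_le {α β : Type*} [MeasurableSpace α] [MeasurableSpace β]
    {μ : Measure α} [IsFiniteMeasure μ] {ν : Measure β} [SFinite ν] {κ : α → β → ℝ} {h : β → ℝ}
    (hκ : Measurable (Function.uncurry κ)) (hh : Integrable h ν)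
    (hbound : ∀ᵐ x ∂μ, ∀ᵐ y ∂ν, ‖κ x y‖ ≤ h y) :
    Integrable (Function.uncurry κ) (μ.prod ν) := by
  refine (integrable_prod_iff hκ.aestronglyMeasurable).2 ⟨?_, ?_⟩
  · filter_upwards [hbound] with x hx
    exact hh.mono' (hκ.comp measurable_prodMk_left).aestronglyMeasurable hx
  · refine Integrable.of_bound
      (hκ.norm.stronglyMeasurable.integral_prod_right' (ν := ν)).aestronglyMeasurable
      (∫ y, h y ∂ν) ?_
    filter_upwards [hbound] with x hx
    rw [Real.norm_of_nonneg (integral_nonneg fun _ => norm_nonneg _)]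
    exact integral_mono_ae (hh.mono' (hκ.comp measurable_prodMk_left).norm.aestronglyMeasurable
      (hx.mono fun y hy => by simpa using hy)) hh hx

section Kernel

variable {κ : ℝ → ℝ → ℝ} {h : ℝ → ℝ}

lemma kernel_mul_ae_bound {k : ℝ → ℝ → ℝ} {g Φ : ℝ → ℝ}
    (hk : ∀ t ∈ Icc (0:ℝ) 1, ∀ s ∈ Icc (0:ℝ) 1, 0 ≤ k t s)
    (hkΦ : ∀ t ∈ Icc (0:ℝ) 1, ∀ᵐ s ∂(volume.restrict (Icc (0:ℝ) 1)), k t s ≤ Φ s)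
    (hg : ∀ᵐ s ∂(volume.restrict (Icc (0:ℝ) 1)), 0 ≤ g s) :
    ∀ t ∈ Icc (0:ℝ) 1, ∀ᵐ s ∂(volume.restrict (Icc (0:ℝ) 1)),
      0 ≤ k t s * g s ∧ k t s * g s ≤ g s * Φ s := by
  intro t ht
  filter_upwards [ae_restrict_mem measurableSet_Icc, hkΦ t ht, hg] with s hs hks hgs
  exact ⟨mul_nonneg (hk t ht s hs) hgs, by nlinarith⟩

lemma integrableOn_of_kernel_bound (hκm : Measurable (Function.uncurry κ))
    (hh : IntegrableOn h (Icc 0 1))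
    (hκ : ∀ t ∈ Icc (0:ℝ) 1, ∀ᵐ s ∂(volume.restrict (Icc (0:ℝ) 1)), 0 ≤ κ t s ∧ κ t s ≤ h s)
    {t : ℝ} (ht : t ∈ Icc (0:ℝ) 1) : IntegrableOn (κ t) (Icc 0 1) :=
  hh.mono' (hκm.comp measurable_prodMk_left).aestronglyMeasurable
    ((hκ t ht).mono fun _ hs => (Real.norm_of_nonneg hs.1).trans_le hs.2)

lemma intervalIntegral_kernel_nonneg
    (hκ : ∀ t ∈ Icc (0:ℝ) 1, ∀ᵐ s ∂(volume.restrict (Icc (0:ℝ) 1)), 0 ≤ κ t s ∧ κ t s ≤ h s)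
    {t : ℝ} (ht : t ∈ Icc (0:ℝ) 1) : 0 ≤ ∫ s in (0:ℝ)..1, κ t s := by
  rw [intervalIntegral_zero_one_eq]
  exact integral_nonneg_of_ae ((hκ t ht).mono fun _ hs => hs.1)

lemma intervalIntegral_kernel_le (hκm : Measurable (Function.uncurry κ))
    (hh : IntegrableOn h (Icc 0 1))
    (hκ : ∀ t ∈ Icc (0:ℝ) 1, ∀ᵐ s ∂(volume.restrict (Icc (0:ℝ) 1)), 0 ≤ κ t s ∧ κ t s ≤ h s)
    {t : ℝ} (ht : t ∈ Icc (0:ℝ) 1) : ∫ s in (0:ℝ)..1, κ t s ≤ ∫ s in Icc (0:ℝ) 1, h s := by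
  rw [intervalIntegral_zero_one_eq]
  exact integral_mono_ae (integrableOn_of_kernel_bound hκm hh hκ ht) hh
    ((hκ t ht).mono fun _ hs => hs.2)

lemma intervalIntegral_kernel_mul_le (hκm : Measurable (Function.uncurry κ))
    (hh : IntegrableOn h (Icc 0 1))
    (hκ : ∀ t ∈ Icc (0:ℝ) 1, ∀ᵐ s ∂(volume.restrict (Icc (0:ℝ) 1)), 0 ≤ κ t s ∧ κ t s ≤ h s)
    {φ : ℝ → ℝ} {M : ℝ} (hM : 0 ≤ M) (hφ : ∀ᵐ s ∂(volume.restrict (Icc (0:ℝ) 1)), φ s ≤ M)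
    {t : ℝ} (ht : t ∈ Icc (0:ℝ) 1) :
    ∫ s in (0:ℝ)..1, κ t s * φ s ≤ M * ∫ s in (0:ℝ)..1, κ t s := by
  rw [intervalIntegral_zero_one_eq, intervalIntegral_zero_one_eq]
  exact integral_mul_le_of_ae_le hM (integrableOn_of_kernel_bound hκm hh hκ ht)
    ((hκ t ht).mono fun _ hs => hs.1) hφ

lemma bddAbove_image_add_intervalIntegral_kernel {φ : ℝ → ℝ} (hφ : ContinuousOn φ (Icc 0 1))
    (hκm : Measurable (Function.uncurry κ)) (hh : IntegrableOn h (Icc 0 1))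
    (hκ : ∀ t ∈ Icc (0:ℝ) 1, ∀ᵐ s ∂(volume.restrict (Icc (0:ℝ) 1)), 0 ≤ κ t s ∧ κ t s ≤ h s) :
    BddAbove ((fun t => φ t + ∫ s in (0:ℝ)..1, κ t s) '' Icc (0:ℝ) 1) := by
  obtain ⟨C, hC⟩ := isCompact_Icc.bddAbove_image hφ
  refine ⟨C + ∫ s in Icc (0:ℝ) 1, h s, ?_⟩
  rintro _ ⟨t, ht, rfl⟩
  exact add_le_add (hC ⟨t, ht, rfl⟩) (intervalIntegral_kernel_le hκm hh hκ ht)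

variable {μA : Measure ℝ} [IsFiniteMeasure μA]

lemma integrable_uncurry_of_kernel_bound (hmem : ∀ᵐ t ∂μA, t ∈ Icc (0:ℝ) 1)
    (hκm : Measurable (Function.uncurry κ)) (hh : IntegrableOn h (Icc 0 1))
    (hκ : ∀ t ∈ Icc (0:ℝ) 1, ∀ᵐ s ∂(volume.restrict (Icc (0:ℝ) 1)), 0 ≤ κ t s ∧ κ t s ≤ h s) :
    Integrable (Function.uncurry κ) (μA.prod (volume.restrict (Icc (0:ℝ) 1))) :=
  integrable_uncurry_of_ae_norm_le hκm hh
    (hmem.mono fun t ht => (hκ t ht).mono fun _ hs => (Real.norm_of_nonneg hs.1).trans_le hs.2)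

lemma integrable_intervalIntegral_kernel (hmem : ∀ᵐ t ∂μA, t ∈ Icc (0:ℝ) 1)
    (hκm : Measurable (Function.uncurry κ)) (hh : IntegrableOn h (Icc 0 1))
    (hκ : ∀ t ∈ Icc (0:ℝ) 1, ∀ᵐ s ∂(volume.restrict (Icc (0:ℝ) 1)), 0 ≤ κ t s ∧ κ t s ≤ h s) :
    Integrable (fun t => ∫ s in (0:ℝ)..1, κ t s) μA := by
  simpa only [intervalIntegral_zero_one_eq, Function.uncurry_apply_pair] using
    (integrable_uncurry_of_kernel_bound hmem hκm hh hκ).integral_prod_left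

lemma integral_intervalIntegral_kernel_comm (hmem : ∀ᵐ t ∂μA, t ∈ Icc (0:ℝ) 1)
    (hκm : Measurable (Function.uncurry κ)) (hh : IntegrableOn h (Icc 0 1))
    (hκ : ∀ t ∈ Icc (0:ℝ) 1, ∀ᵐ s ∂(volume.restrict (Icc (0:ℝ) 1)), 0 ≤ κ t s ∧ κ t s ≤ h s) :
    ∫ t, (∫ s in (0:ℝ)..1, κ t s) ∂μA = ∫ s in (0:ℝ)..1, ∫ t, κ t s ∂μA := by
  simpa only [intervalIntegral_zero_one_eq] using
    integral_integral_swap (integrable_uncurry_of_kernel_bound hmem hκm hh hκ)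

end Kernel

section Solution

variable {α : Type*} [MeasurableSpace α] {μA : Measure α} {s : Set α} {u γ F G : α → ℝ}
  {c μ M : ℝ}

lemma mul_one_sub_integral_le (hmem : ∀ᵐ t ∂μA, t ∈ s) (hu : Integrable u μA)
    (hγ : Integrable γ μA) (hG : Integrable G μA) (hu0 : ∀ t ∈ s, 0 ≤ u t) (hμ : 1 ≤ μ)
    (hsol : ∀ t ∈ s, μ * u t = γ t * c + F t) (hFG : ∀ t ∈ s, F t ≤ M * G t)
    (hc : c ≤ ∫ t, u t ∂μA) :
    c * (1 - ∫ t, γ t ∂μA) ≤ M * ∫ t, G t ∂μA := by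
  have hF : F =ᵐ[μA] fun t => μ * u t - γ t * c := by
    filter_upwards [hmem] with t ht
    linarith [hsol t ht]
  have hFint : Integrable F μA := ((hu.const_mul μ).sub (hγ.mul_const c)).congr hF.symm
  have hF_eq : ∫ t, F t ∂μA = μ * ∫ t, u t ∂μA - (∫ t, γ t ∂μA) * c := by
    rw [integral_congr_ae hF, integral_sub (hu.const_mul μ) (hγ.mul_const c),
      integral_const_mul, integral_mul_const]
  have hF_le : ∫ t, F t ∂μA ≤ M * ∫ t, G t ∂μA := by
    rw [← integral_const_mul]
    exact integral_mono_ae hFint (hG.const_mul M) (hmem.mono hFG)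
  have hu_int0 : 0 ≤ ∫ t, u t ∂μA := integral_nonneg_of_ae (hmem.mono hu0)
  nlinarith

lemma le_of_mul_eq_add_of_le_integral (hmem : ∀ᵐ t ∂μA, t ∈ s) (hu : Integrable u μA)
    (hγ : Integrable γ μA) (hG : Integrable G μA) (hu0 : ∀ t ∈ s, 0 ≤ u t)
    (hγ0 : ∀ t ∈ s, 0 ≤ γ t) (hαγ : ∫ t, γ t ∂μA < 1) (hμ : 1 ≤ μ)
    (hsol : ∀ t ∈ s, μ * u t = γ t * c + F t) (hFG : ∀ t ∈ s, F t ≤ M * G t)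
    (hc : c ≤ ∫ t, u t ∂μA) {t : α} (ht : t ∈ s) :
    u t ≤ M * (γ t / (1 - ∫ t, γ t ∂μA) * ∫ t, G t ∂μA + G t) := by
  have hc' : c ≤ M * (∫ t, G t ∂μA) / (1 - ∫ t, γ t ∂μA) :=
    (le_div_iff₀ (sub_pos.2 hαγ)).2 (mul_one_sub_integral_le hmem hu hγ hG hu0 hμ hsol hFG hc)
  calc u t ≤ μ * u t := le_mul_of_one_le_left (hu0 t ht) hμ
    _ = γ t * c + F t := hsol t ht
    _ ≤ γ t * (M * (∫ t, G t ∂μA) / (1 - ∫ t, γ t ∂μA)) + M * G t :=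
      add_le_add (mul_le_mul_of_nonneg_left hc' (hγ0 t ht)) (hFG t ht)
    _ = M * (γ t / (1 - ∫ t, γ t ∂μA) * ∫ t, G t ∂μA + G t) := by ring

end Solution

theorem stmt3_general
    (k : ℝ → ℝ → ℝ) (g : ℝ → ℝ) (f : ℝ → ℝ → ℝ) (Φ γ : ℝ → ℝ) (a b c : ℝ)
    (H : (ℝ → ℝ) → ℝ) (K : Set (ℝ → ℝ))
    (hk_meas : Measurable (Function.uncurry k))
    (hk_nonneg : ∀ t ∈ Icc (0:ℝ) 1, ∀ s ∈ Icc (0:ℝ) 1, 0 ≤ k t s)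
    (hkΦ_up : ∀ t ∈ Icc (0:ℝ) 1, ∀ᵐ s ∂(volume.restrict (Icc (0:ℝ) 1)), k t s ≤ Φ s)
    (hg_meas : Measurable g)
    (hg_nonneg : ∀ᵐ s ∂(volume.restrict (Icc (0:ℝ) 1)), 0 ≤ g s)
    (hgΦ_int : IntegrableOn (fun s => g s * Φ s) (Icc (0:ℝ) 1))
    (hf_nonneg : ∀ t u : ℝ, 0 ≤ u → 0 ≤ f t u)
    (hγ_cont : ContinuousOn γ (Icc (0:ℝ) 1))
    (hγ_nonneg : ∀ t ∈ Icc (0:ℝ) 1, 0 ≤ γ t)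
    (hK : K = {u : ℝ → ℝ | ContinuousOn u (Icc (0:ℝ) 1) ∧
      (∀ t ∈ Icc (0:ℝ) 1, 0 ≤ u t) ∧ c * nrm u ≤ minOnAB u a b})
    (ρ : ℝ) (hρ : 0 < ρ) (hI1 : CondI1B k g f γ H K ρ) :
    ∀ u ∈ K, nrm u = ρ → ∀ μ : ℝ, 1 ≤ μ →
      ¬ (∀ t ∈ Icc (0:ℝ) 1, μ * u t = Tham k g f γ H u t) := by
  intro u hu hnrm μ hμ hsol
  obtain ⟨μA, hfin, hnull, hαγ, hHle, fb, hfb, hlt⟩ := hI1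
  obtain ⟨hu_cont, hu_nonneg, -⟩ := hK ▸ hu
  have hmem : ∀ᵐ t ∂μA, t ∈ Icc (0:ℝ) 1 := mem_ae_iff.2 hnull
  have hκm : Measurable (Function.uncurry fun t s => k t s * g s) :=
    hk_meas.mul (hg_meas.comp measurable_snd)
  have hκ := kernel_mul_ae_bound hk_nonneg hkΦ_up hg_nonneg
  have hfbρ : 0 ≤ fb * ρ := by
    have : (ae (volume.restrict (Icc (0:ℝ) 1))).NeBot := ae_restrict_neBot.2 (by simp)
    obtain ⟨t, ht⟩ := hfb.exists
    exact (hf_nonneg t 0 le_rfl).trans (ht 0 le_rfl hρ.le)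
  have hfu : ∀ᵐ s ∂(volume.restrict (Icc (0:ℝ) 1)), f s (u s) ≤ fb * ρ := by
    filter_upwards [hfb, ae_restrict_mem measurableSet_Icc] with s hs hsI
    exact hs _ (hu_nonneg s hsI) ((le_abs_self _).trans (hnrm ▸ abs_le_nrm hu_cont hsI))
  have hIK : ∫ t, (∫ s in (0:ℝ)..1, k t s * g s) ∂μA =
      ∫ s in (0:ℝ)..1, (∫ t', k t' s ∂μA) * g s := by
    simp only [integral_intervalIntegral_kernel_comm hmem hκm hgΦ_int hκ, integral_mul_const]
  have hpt : ∀ t ∈ Icc (0:ℝ) 1, u t ≤ fb * ρ * (γ t / (1 - ∫ t', γ t' ∂μA) *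
      (∫ s in (0:ℝ)..1, (∫ t', k t' s ∂μA) * g s) + ∫ s in (0:ℝ)..1, k t s * g s) := by
    rw [← hIK]
    exact fun t => le_of_mul_eq_add_of_le_integral hmem
      (hu_cont.integrable_of_ae_mem isCompact_Icc hmem)
      (hγ_cont.integrable_of_ae_mem isCompact_Icc hmem)
      (integrable_intervalIntegral_kernel hmem hκm hgΦ_int hκ) hu_nonneg hγ_nonneg hαγ hμ hsol
      (fun t ht => intervalIntegral_kernel_mul_le hκm hgΦ_int hκ hfbρ hfu ht) (hHle u hu hnrm)
  have hbdd := bddAbove_image_add_intervalIntegral_kernel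
    ((hγ_cont.div_const (1 - ∫ t', γ t' ∂μA)).mul_const
      (∫ s in (0:ℝ)..1, (∫ t', k t' s ∂μA) * g s)) hκm hgΦ_int hκ
  have hρ_le := nrm_le (u := u) fun t ht => (abs_of_nonneg (hu_nonneg t ht)).trans_le
    ((hpt t ht).trans (mul_le_mul_of_nonneg_left (le_csSup hbdd ⟨t, ht, rfl⟩) hfbρ))
  rw [hnrm] at hρ_le
  nlinarith

theorem stmt3
    (k : ℝ → ℝ → ℝ) (g : ℝ → ℝ) (f : ℝ → ℝ → ℝ) (Φ γ : ℝ → ℝ) (a b c₁ c₂ c : ℝ)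
    (H : (ℝ → ℝ) → ℝ) (K : Set (ℝ → ℝ))
    (hk_meas : Measurable (Function.uncurry k))
    (hk_nonneg : ∀ t ∈ Icc (0:ℝ) 1, ∀ s ∈ Icc (0:ℝ) 1, 0 ≤ k t s)
    (hk_cont : ∀ τ ∈ Icc (0:ℝ) 1, ∀ᵐ s ∂(volume.restrict (Icc (0:ℝ) 1)),
      Filter.Tendsto (fun t => |k t s - k τ s|) (nhdsWithin τ (Icc (0:ℝ) 1)) (nhds 0))
    (ha : 0 ≤ a) (hab : a ≤ b) (hb : b ≤ 1)
    (hΦ_meas : Measurable Φ)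
    (hΦ_bdd : ∃ C, ∀ᵐ s ∂(volume.restrict (Icc (0:ℝ) 1)), |Φ s| ≤ C)
    (hc₁ : c₁ ∈ Ioc (0:ℝ) 1)
    (hkΦ_up : ∀ t ∈ Icc (0:ℝ) 1, ∀ᵐ s ∂(volume.restrict (Icc (0:ℝ) 1)), k t s ≤ Φ s)
    (hkΦ_low : ∀ t ∈ Icc a b, ∀ᵐ s ∂(volume.restrict (Icc (0:ℝ) 1)), c₁ * Φ s ≤ k t s)
    (hg_meas : Measurable g)
    (hg_nonneg : ∀ᵐ s ∂(volume.restrict (Icc (0:ℝ) 1)), 0 ≤ g s)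
    (hgΦ_int : IntegrableOn (fun s => g s * Φ s) (Icc (0:ℝ) 1))
    (hΦg_pos : 0 < ∫ s in a..b, Φ s * g s)
    (hf_meas : ∀ u : ℝ, Measurable (fun t => f t u))
    (hf_cont : ∀ᵐ t ∂(volume.restrict (Icc (0:ℝ) 1)), ContinuousOn (f t) (Ici 0))
    (hf_nonneg : ∀ t u : ℝ, 0 ≤ u → 0 ≤ f t u)
    (hf_bdd : ∀ r > 0, ∃ C, ∀ᵐ t ∂(volume.restrict (Icc (0:ℝ) 1)), ∀ u ∈ Icc (0:ℝ) r, f t u ≤ C)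
    (hγ_cont : ContinuousOn γ (Icc (0:ℝ) 1))
    (hγ_nonneg : ∀ t ∈ Icc (0:ℝ) 1, 0 ≤ γ t)
    (hc₂ : c₂ ∈ Ioc (0:ℝ) 1)
    (hγ_low : ∀ t ∈ Icc a b, c₂ * nrm γ ≤ γ t)
    (hc : c = min c₁ c₂)
    (hK : K = {u : ℝ → ℝ | ContinuousOn u (Icc (0:ℝ) 1) ∧
      (∀ t ∈ Icc (0:ℝ) 1, 0 ≤ u t) ∧ c * nrm u ≤ minOnAB u a b})
    (hH_nonneg : ∀ u ∈ K, 0 ≤ H u)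
    (hH_cont : ∀ u ∈ K, ∀ ε > 0, ∃ δ > 0, ∀ v ∈ K,
      nrm (fun t => u t - v t) < δ → |H u - H v| < ε)
    (hH_bdd : ∀ M : ℝ, ∃ M', ∀ u ∈ K, nrm u ≤ M → H u ≤ M')
    (ρ : ℝ) (hρ : 0 < ρ) (hI1 : CondI1B k g f γ H K ρ) :
    ∀ u ∈ K, nrm u = ρ → ∀ μ : ℝ, 1 ≤ μ →
      ¬ (∀ t ∈ Icc (0:ℝ) 1, μ * u t = Tham k g f γ H u t) :=
  stmt3_general k g f Φ γ a b c H K hk_meas hk_nonneg hkΦ_up hg_meas hg_nonneg hgΦ_int hf_nonneg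
    hγ_cont hγ_nonneg hK ρ hρ hI1
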